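/- arXiv:2205.05569 — 5 statements merged into one kernel-verified Lean document; each statement's English description precedes it below -/
import Mathlib

section
/- Let (S, dist_S) and (A, dist_A) be metric spaces with their Borel σ-algebras. Let p : S → A → ProbabilityMeasure S be a measurable Markov kernel satisfying the dual Wasserstein-Lipschitz condition: for all (s,a), (s',a') ∈ S×A and every bounded 1-Lipschitz function f : S → ℝ, |∫ f d p(s,a) − ∫ f d p(s',a')| ≤ L_P (dist_S(s,s') + dist_A(a,a')). Let π : S → ProbabilityMeasure A be a measurable policy satisfying: for all s, z ∈ S and every bounded 1-Lipschitz function h : A → ℝ, |∫ h d π(s) − ∫ h d π(z)| ≤ L_π dist_S(s,z). Then for every bounded 1-Lipschitz function f : S → ℝ, the function g(s) := ∫_A (∫_S f(s') d p(s,a)(s')) d π(s)(a) satisfies |g(s) − g(z)| ≤ L_P (1 + L_π) dist_S(s,z) for all s, z ∈ S. -/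
/-!
Write `F s a = ∫ f d p(s,a)`, so that `g s = ∫ F s · dπ(s)`. By the kernel condition, `F` is
`L_P`-Lipschitz in each variable separately, and it is bounded by `sup |f|`. Then
`g s - g z = ∫ (F s - F z) dπ(s) + (∫ F z dπ(s) - ∫ F z dπ(z))`: the first term is at most
`L_P dist(s,z)` pointwise, and the second is at most `L_P · L_π dist(s,z)` because `F z / L_P` is a
bounded 1-Lipschitz test function for the policy condition. Integrability of `F s` against `π(s)`
comes from its continuity.
-/

open MeasureTheory NNReal

theorem abs_integral_le_of_abs_le {A : Type*} [MeasurableSpace A] {μ : Measure A}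
    [IsProbabilityMeasure μ] {u : A → ℝ} {c : ℝ} (hu : ∀ a, |u a| ≤ c) : |∫ a, u a ∂μ| ≤ c := by
  simpa using norm_integral_le_of_norm_le_const (μ := μ) (f := u) (C := c)
    (.of_forall fun a => by simpa using hu a)

theorem abs_integral_sub_integral_le_of_abs_sub_le {A : Type*} [MeasurableSpace A]
    {μ : Measure A} [IsProbabilityMeasure μ]
    {u v : A → ℝ} (hu : Integrable u μ) (hv : Integrable v μ) {c : ℝ}
    (huv : ∀ a, |u a - v a| ≤ c) :
    |(∫ a, u a ∂μ) - ∫ a, v a ∂μ| ≤ c := by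
  rw [← integral_sub hu hv]
  exact abs_integral_le_of_abs_le huv

section

variable {A : Type*} [PseudoMetricSpace A]

theorem LipschitzWith.const_mul_inv {K : ℝ≥0} {h : A → ℝ} (hh : LipschitzWith K h) :
    LipschitzWith 1 fun a => (K : ℝ)⁻¹ * h a := by
  refine .of_dist_le_mul fun a a' => ?_
  rcases eq_or_ne K 0 with rfl | hK
  · simp
  rw [Real.dist_eq, ← mul_sub, abs_mul, abs_inv, NNReal.abs_eq, ← Real.dist_eq,
    NNReal.coe_one, one_mul, inv_mul_le_iff₀ (by positivity)]
  exact hh.dist_le_mul a a'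

variable [MeasurableSpace A]

theorem LipschitzWith.integrable_of_abs_le [OpensMeasurableSpace A] {μ : Measure A}
    [IsFiniteMeasure μ] {K : ℝ≥0} {h : A → ℝ} (hh : LipschitzWith K h) {M : ℝ}
    (hM : ∀ a, |h a| ≤ M) : Integrable h μ :=
  .of_bound hh.continuous.aestronglyMeasurable M (.of_forall hM)

theorem abs_integral_sub_integral_le_of_lipschitzWith {μ ν : Measure A} [IsProbabilityMeasure μ]
    [IsProbabilityMeasure ν] {C : ℝ}
    (hμν : ∀ h : A → ℝ, LipschitzWith 1 h → (∃ M, ∀ a, |h a| ≤ M) →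
      |(∫ a, h a ∂μ) - ∫ a, h a ∂ν| ≤ C)
    {K : ℝ≥0} {h : A → ℝ} (hh : LipschitzWith K h) {M : ℝ} (hM : ∀ a, |h a| ≤ M) :
    |(∫ a, h a ∂μ) - ∫ a, h a ∂ν| ≤ K * C := by
  rcases eq_or_ne K 0 with rfl | hK
  · obtain ⟨a₀⟩ : Nonempty A := Measure.nonempty_of_neZero μ
    have hconst (a : A) : h a = h a₀ := dist_le_zero.mp (by simpa using hh.dist_le_mul a a₀)
    simp [hconst]
  have hK' : (0 : ℝ) < K := by positivity
  have hscaled := hμν _ hh.const_mul_inv ⟨(K : ℝ)⁻¹ * M, fun a => by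
    rw [abs_mul, abs_inv, NNReal.abs_eq]
    gcongr
    exact hM a⟩
  rwa [integral_const_mul, integral_const_mul, ← mul_sub, abs_mul, abs_inv, NNReal.abs_eq,
    inv_mul_le_iff₀ hK'] at hscaled

end

theorem lip_g_general {S A : Type*} [MetricSpace S] [MeasurableSpace S]
    [MetricSpace A] [MeasurableSpace A] [BorelSpace A]
    (p : S → A → Measure S) (hp_prob : ∀ s a, IsProbabilityMeasure (p s a))
    (π : S → Measure A) (hπ_prob : ∀ s, IsProbabilityMeasure (π s))
    (L_P L_π : ℝ)
    (hp_lip : ∀ (s s' : S) (a a' : A), ∀ f : S → ℝ, LipschitzWith 1 f →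
      (∃ M, ∀ y, |f y| ≤ M) →
      |(∫ y, f y ∂(p s a)) - ∫ y, f y ∂(p s' a')| ≤ L_P * (dist s s' + dist a a'))
    (hπ_lip : ∀ s z : S, ∀ h : A → ℝ, LipschitzWith 1 h → (∃ M, ∀ a, |h a| ≤ M) →
      |(∫ a, h a ∂(π s)) - ∫ a, h a ∂(π z)| ≤ L_π * dist s z) :
    ∀ f : S → ℝ, LipschitzWith 1 f → (∃ M, ∀ y, |f y| ≤ M) →
      ∀ s z : S,
        |(∫ a, ∫ s', f s' ∂(p s a) ∂(π s)) - ∫ a, ∫ s', f s' ∂(p z a) ∂(π z)| ≤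
          L_P * (1 + L_π) * dist s z := by
  intro f hf hfb s z
  rcases eq_or_ne s z with rfl | hsz
  · simp
  obtain ⟨M, hM⟩ := hfb
  set F : S → A → ℝ := fun s a => ∫ y, f y ∂(p s a)
  have hF_bdd (s : S) (a : A) : |F s a| ≤ M :=
    have := hp_prob s a
    abs_integral_le_of_abs_le hM
  have hF_lip_S (s z : S) (a : A) : |F s a - F z a| ≤ L_P * dist s z := by
    have := hp_lip s z a a f hf ⟨M, hM⟩
    rwa [dist_self, add_zero] at this
  have := hπ_prob s
  have := hπ_prob z
  obtain ⟨a₀⟩ : Nonempty A := Measure.nonempty_of_neZero (π s)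
  have hL_P : 0 ≤ L_P := nonneg_of_mul_nonneg_left
    ((abs_nonneg _).trans (hF_lip_S s z a₀)) (dist_pos.mpr hsz)
  have hF_lip_A (s : S) : LipschitzWith ⟨L_P, hL_P⟩ (F s) := .of_dist_le_mul fun a a' => by
    have := hp_lip s s a a' f hf ⟨M, hM⟩
    rwa [dist_self, zero_add] at this
  have h_kernel_step : |(∫ a, F s a ∂(π s)) - ∫ a, F z a ∂(π s)| ≤ L_P * dist s z :=
    abs_integral_sub_integral_le_of_abs_sub_le ((hF_lip_A s).integrable_of_abs_le (hF_bdd s))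
      ((hF_lip_A z).integrable_of_abs_le (hF_bdd z)) (hF_lip_S s z)
  have h_policy_step : |(∫ a, F z a ∂(π s)) - ∫ a, F z a ∂(π z)| ≤ L_P * (L_π * dist s z) :=
    abs_integral_sub_integral_le_of_lipschitzWith (hπ_lip s z) (hF_lip_A z) (hF_bdd z)
  calc |(∫ a, F s a ∂(π s)) - ∫ a, F z a ∂(π z)|
      ≤ |(∫ a, F s a ∂(π s)) - ∫ a, F z a ∂(π s)| +
          |(∫ a, F z a ∂(π s)) - ∫ a, F z a ∂(π z)| := abs_sub_le _ _ _
    _ ≤ L_P * dist s z + L_P * (L_π * dist s z) := add_le_add h_kernel_step h_policy_step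
    _ = L_P * (1 + L_π) * dist s z := by ring

/-- **Proposition (lip_g).** The one-step expectation operator of an `L_P`-Lipschitz
(in the Wasserstein sense, dual form) Markov kernel under an `L_π`-Lipschitz policy maps
bounded 1-Lipschitz functions to `L_P (1 + L_π)`-Lipschitz functions. -/
theorem lip_g {S A : Type*} [MetricSpace S] [MeasurableSpace S] [BorelSpace S]
    [MetricSpace A] [MeasurableSpace A] [BorelSpace A]
    (p : S → A → Measure S) (hp_prob : ∀ s a, IsProbabilityMeasure (p s a))
    (hp_meas : Measurable fun q : S × A => p q.1 q.2)
    (π : S → Measure A) (hπ_prob : ∀ s, IsProbabilityMeasure (π s))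
    (hπ_meas : Measurable π)
    (L_P L_π : ℝ)
    (hp_lip : ∀ (s s' : S) (a a' : A), ∀ f : S → ℝ, LipschitzWith 1 f →
      (∃ M, ∀ y, |f y| ≤ M) →
      |(∫ y, f y ∂(p s a)) - ∫ y, f y ∂(p s' a')| ≤ L_P * (dist s s' + dist a a'))
    (hπ_lip : ∀ s z : S, ∀ h : A → ℝ, LipschitzWith 1 h → (∃ M, ∀ a, |h a| ≤ M) →
      |(∫ a, h a ∂(π s)) - ∫ a, h a ∂(π z)| ≤ L_π * dist s z) :
    ∀ f : S → ℝ, LipschitzWith 1 f → (∃ M, ∀ y, |f y| ≤ M) →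
      ∀ s z : S,
        |(∫ a, ∫ s', f s' ∂(p s a) ∂(π s)) - ∫ a, ∫ s', f s' ∂(p z a) ∂(π z)| ≤
          L_P * (1 + L_π) * dist s z :=
  lip_g_general p hp_prob π hπ_prob L_P L_π hp_lip hπ_lip
end

section
/- Let (S, dist_S) be a metric space with its Borel σ-algebra, A a measurable space, and p : S → A → ProbabilityMeasure S a measurable Markov kernel satisfying the time-Lipschitz condition: for every (s,a) ∈ S×A and every 1-Lipschitz function f : S → ℝ integrable with respect to p(s,a), |∫ f d p(s,a) − f(s)| ≤ L_T. Fix d ∈ ℕ, a state s₁ ∈ S and actions a₁, …, a_d ∈ A, and define the belief measures by b₀ = δ_{s₁} (the Dirac measure at s₁) and b_k = b_{k−1}.bind (s ↦ p(s, a_k)) for k = 1, …, d. Then for every 1-Lipschitz function f : S → ℝ integrable with respect to b_d, |∫ f d b_d − f(s₁)| ≤ d · L_T. -/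
/-!
Integrating the time-Lipschitz inequality `|∫ f dp(s,a) − f(s)| ≤ L_T` against a probability
measure `μ` shows that one more step of the belief moves `∫ f dμ` by at most `L_T`; since
`s ↦ ∫ f dp(s,a)` and `f` differ by a bounded function, `f` stays integrable when a step is
undone. Peeling the actions off the end of the queue and
using the triangle inequality gives the bound `d · L_T`.
-/

open MeasureTheory ProbabilityTheory

/-- The belief over the current state given a last observed state `s₁` and a queue of actions
`as = [a₁, …, a_d]`: the iterated bind of `δ_{s₁}` through the kernel `p` with the actions of
the queue, applied in order. -/
noncomputable def belief {S A : Type*} [MeasurableSpace S]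
    (p : S → A → Measure S) (s₁ : S) (as : List A) : Measure S :=
  as.foldl (fun b a => b.bind fun s => p s a) (Measure.dirac s₁)

section KernelStep

variable {S : Type*} [MeasurableSpace S] {μ : Measure S} {κ : Kernel S S} {f : S → ℝ} {L : ℝ}

lemma integrable_integral_of_integrable_comp (hf : Integrable f (κ ∘ₘ μ)) :
    Integrable (fun s => ∫ y, f y ∂κ s) μ := by
  rw [Measure.comp_eq_comp_const_apply] at hf
  simpa using hf.integral_comp

lemma integral_comp_eq_integral_integral (hf : Integrable f (κ ∘ₘ μ)) :
    ∫ y, f y ∂(κ ∘ₘ μ) = ∫ s, ∫ y, f y ∂κ s ∂μ := by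
  rw [Measure.comp_eq_comp_const_apply] at hf ⊢
  simpa using Kernel.integral_comp hf

lemma integrable_of_ae_abs_sub_le [IsFiniteMeasure μ] {g : S → ℝ} (hg : Integrable g μ)
    (hf : AEStronglyMeasurable f μ) (hgf : ∀ᵐ s ∂μ, |g s - f s| ≤ L) : Integrable f μ := by
  have hdiff : Integrable (g - f) μ := Integrable.of_bound (hg.1.sub hf) L hgf
  simpa using hg.sub hdiff

lemma ae_abs_integral_sub_le_of_integrable_comp (hf : Integrable f (κ ∘ₘ μ))
    (hκ : ∀ s, Integrable f (κ s) → |∫ y, f y ∂κ s - f s| ≤ L) :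
    ∀ᵐ s ∂μ, |∫ y, f y ∂κ s - f s| ≤ L := by
  filter_upwards [Measure.ae_integrable_of_integrable_comp hf] with s hs using hκ s hs

lemma integrable_of_integrable_comp [IsFiniteMeasure μ] (hfμ : AEStronglyMeasurable f μ)
    (hf : Integrable f (κ ∘ₘ μ)) (hκ : ∀ s, Integrable f (κ s) → |∫ y, f y ∂κ s - f s| ≤ L) :
    Integrable f μ :=
  integrable_of_ae_abs_sub_le (integrable_integral_of_integrable_comp hf) hfμ
    (ae_abs_integral_sub_le_of_integrable_comp hf hκ)

lemma abs_integral_comp_sub_integral_le [IsProbabilityMeasure μ]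
    (hfμ : AEStronglyMeasurable f μ) (hf : Integrable f (κ ∘ₘ μ))
    (hκ : ∀ s, Integrable f (κ s) → |∫ y, f y ∂κ s - f s| ≤ L) :
    |∫ y, f y ∂(κ ∘ₘ μ) - ∫ y, f y ∂μ| ≤ L := by
  have hg := integrable_integral_of_integrable_comp hf
  have hfint := integrable_of_integrable_comp hfμ hf hκ
  rw [integral_comp_eq_integral_integral hf, ← integral_sub hg hfint]
  calc |∫ s, (∫ y, f y ∂κ s - f s) ∂μ|
      ≤ ∫ s, |∫ y, f y ∂κ s - f s| ∂μ := abs_integral_le_integral_abs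
    _ ≤ ∫ _, L ∂μ :=
        integral_mono_ae (hg.sub hfint).abs (integrable_const L)
          (ae_abs_integral_sub_le_of_integrable_comp hf hκ)
    _ = L := by simp

end KernelStep

section Belief

variable {S A : Type*} [MeasurableSpace S] {p : S → A → Measure S}

lemma belief_append_singleton (s₁ : S) (as : List A) (a : A) :
    belief p s₁ (as ++ [a]) = (belief p s₁ as).bind fun s => p s a := by
  simp [belief, List.foldl_append]

lemma isProbabilityMeasure_belief [MeasurableSpace A]
    (hp_prob : ∀ s a, IsProbabilityMeasure (p s a))
    (hp_meas : Measurable fun q : S × A => p q.1 q.2) (s₁ : S) (as : List A) :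
    IsProbabilityMeasure (belief p s₁ as) := by
  induction as using List.reverseRecOn with
  | nil => simpa [belief] using Measure.dirac.isProbabilityMeasure
  | append_singleton as a ih =>
    rw [belief_append_singleton]
    exact isProbabilityMeasure_bind (hp_meas.comp measurable_prodMk_right).aemeasurable
      (ae_of_all _ fun s => hp_prob s a)

end Belief

/-- **Proposition (tlc_delay).** In an `L_T`-time-Lipschitz MDP (dual form:
`|∫ f dp(s,a) − f(s)| ≤ L_T` for every 1-Lipschitz `f`), the belief after a delay of `d`
steps is within (dual-form) Wasserstein distance `d · L_T` of the Dirac at the last observed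
state. -/
theorem tlc_delay {S A : Type*} [MetricSpace S] [MeasurableSpace S] [BorelSpace S]
    [MeasurableSpace A]
    (p : S → A → Measure S) (hp_prob : ∀ s a, IsProbabilityMeasure (p s a))
    (hp_meas : Measurable fun q : S × A => p q.1 q.2)
    (L_T : ℝ)
    (hTLC : ∀ (s : S) (a : A), ∀ f : S → ℝ, LipschitzWith 1 f → Integrable f (p s a) →
      |(∫ y, f y ∂(p s a)) - f s| ≤ L_T)
    (s₁ : S) (as : List A) :
    ∀ f : S → ℝ, LipschitzWith 1 f → Integrable f (belief p s₁ as) →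
      |(∫ y, f y ∂(belief p s₁ as)) - f s₁| ≤ (as.length : ℝ) * L_T := by
  intro f hf
  induction as using List.reverseRecOn with
  | nil => simp [belief]
  | append_singleton as a ih =>
    intro hint
    have := isProbabilityMeasure_belief hp_prob hp_meas s₁ as
    let κ : Kernel S S := ⟨fun s => p s a, hp_meas.comp measurable_prodMk_right⟩
    have hκ : ∀ s, Integrable f (κ s) → |∫ y, f y ∂κ s - f s| ≤ L_T := fun s => hTLC s a f hf
    replace hint : Integrable f (κ ∘ₘ belief p s₁ as) := by rwa [belief_append_singleton] at hint
    rw [belief_append_singleton]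
    have hfμ : AEStronglyMeasurable f (belief p s₁ as) := hf.continuous.aestronglyMeasurable
    calc |∫ y, f y ∂(κ ∘ₘ belief p s₁ as) - f s₁|
        ≤ |∫ y, f y ∂(κ ∘ₘ belief p s₁ as) - ∫ y, f y ∂(belief p s₁ as)|
          + |∫ y, f y ∂(belief p s₁ as) - f s₁| := abs_sub_le _ _ _
      _ ≤ L_T + (as.length : ℝ) * L_T :=
          add_le_add (abs_integral_comp_sub_integral_le hfμ hint hκ)
            (ih (integrable_of_integrable_comp hfμ hint hκ))
      _ = ((as ++ [a]).length : ℝ) * L_T := by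
          rw [List.length_append, List.length_singleton, Nat.cast_add, Nat.cast_one]; ring
end

section
/- Let (S, dist_S) and (A, dist_A) be metric spaces with their Borel σ-algebras, and let p : S → A → ProbabilityMeasure S be a measurable Markov kernel satisfying: for all (s,a),(s',a') ∈ S×A and every bounded 1-Lipschitz function h : S → ℝ, |∫ h d p(s,a) − ∫ h d p(s',a')| ≤ L_P (dist_S(s,s') + dist_A(a,a')). Fix s ∈ S and let f : A × S → ℝ be bounded, measurable, and 1-Lipschitz with respect to the sum metric dist((a,z),(a',z')) = dist_A(a,a') + dist_S(z,z'). Then the function a ↦ ∫_S f(a, s') d p(s,a)(s') is (1 + L_P)-Lipschitz on A. -/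
open MeasureTheory

/-- **Lemma (g_f_lip, analytic core).** For an `L_P`-Lipschitz (dual Wasserstein form) Markov
kernel `p`, a fixed state `s`, and a bounded measurable function `f : A × S → ℝ` which is
1-Lipschitz for the sum metric, the map `a ↦ ∫ f(a, s') dp(s,a)(s')` is `(1 + L_P)`-Lipschitz. -/
theorem g_f_lip {S A : Type*} [MetricSpace S] [MeasurableSpace S] [BorelSpace S]
    [MetricSpace A] [MeasurableSpace A] [BorelSpace A]
    (p : S → A → Measure S) (hp_prob : ∀ s a, IsProbabilityMeasure (p s a))
    (hp_meas : Measurable fun q : S × A => p q.1 q.2)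
    (L_P : ℝ)
    (hp_lip : ∀ (s s' : S) (a a' : A), ∀ h : S → ℝ, LipschitzWith 1 h →
      (∃ M, ∀ y, |h y| ≤ M) →
      |(∫ y, h y ∂(p s a)) - ∫ y, h y ∂(p s' a')| ≤ L_P * (dist s s' + dist a a'))
    (f : A × S → ℝ) (hf_meas : Measurable f) (hf_bdd : ∃ M, ∀ q, |f q| ≤ M)
    (hf_lip : ∀ (a a' : A) (z z' : S),
      |f (a, z) - f (a', z')| ≤ dist a a' + dist z z')
    (s : S) :
    ∀ a a' : A,
      |(∫ s', f (a, s') ∂(p s a)) - ∫ s', f (a', s') ∂(p s a')| ≤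
        (1 + L_P) * dist a a' := by
  intro a a'
  obtain ⟨M, hM⟩ := hf_bdd
  have hprob := hp_prob s a
  have hint : ∀ (b : A) (μ : Measure S), IsProbabilityMeasure μ →
      Integrable (fun z => f (b, z)) μ := by
    intro b μ hμ
    refine ⟨(hf_meas.comp (measurable_const.prodMk measurable_id)).aestronglyMeasurable, ?_⟩
    refine HasFiniteIntegral.of_bounded (C := M) (Filter.Eventually.of_forall fun z => ?_)
    simpa using hM (b, z)
  -- split
  have key :
      (∫ s', f (a, s') ∂(p s a)) - ∫ s', f (a', s') ∂(p s a') =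
      ((∫ s', (f (a, s') - f (a', s')) ∂(p s a))) +
      ((∫ s', f (a', s') ∂(p s a)) - ∫ s', f (a', s') ∂(p s a')) := by
    rw [integral_sub (hint a _ hprob) (hint a' _ hprob)]
    ring
  rw [key]
  have h1 : |∫ s', (f (a, s') - f (a', s')) ∂(p s a)| ≤ dist a a' := by
    have := norm_integral_le_of_norm_le_const (μ := p s a)
      (f := fun s' => f (a, s') - f (a', s')) (C := dist a a')
      (Filter.Eventually.of_forall fun z => by
        simpa [Real.norm_eq_abs] using hf_lip a a' z z)
    simpa [Real.norm_eq_abs] using this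
  have h2 : |(∫ s', f (a', s') ∂(p s a)) - ∫ s', f (a', s') ∂(p s a')| ≤
      L_P * dist a a' := by
    have hlip : LipschitzWith 1 (fun z : S => f (a', z)) := by
      refine LipschitzWith.of_dist_le_mul fun z z' => ?_
      simpa [Real.dist_eq] using hf_lip a' a' z z'
    have := hp_lip s s a a' (fun z => f (a', z)) hlip ⟨M, fun y => hM (a', y)⟩
    simpa using this
  calc |_ + _| ≤ _ + _ := abs_add_le _ _
    _ ≤ dist a a' + L_P * dist a a' := add_le_add h1 h2
    _ = (1 + L_P) * dist a a' := by ring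
end

section
/- Let S and A be standard Borel measurable spaces, p : S → A → ProbabilityMeasure S a measurable Markov kernel, r : S × A → ℝ a bounded measurable reward, γ ∈ [0,1), and d ≥ 1 an integer delay. Let π_E : S → ProbabilityMeasure A be a measurable (undelayed) policy and π̃ : X → ProbabilityMeasure A a measurable delayed policy on the augmented space X = S × A^d. Define: the undelayed value V(s) = Σ_{t≥0} γ^t E[r(s_t, a_t)] where s₀ = s, a_t ~ π_E(s_t), s_{t+1} ~ p(s_t, a_t) (each expectation taken under the iterated kernel law, the series converging absolutely since r is bounded); the undelayed action value Q(s,a) = r(s,a) + γ ∫ V(s') d p(s,a)(s'); for x = (s₁, a₁, …, a_d) the belief b(x) as the iterated bind of δ_{s₁} through p(·, a₁), …, p(·, a_d); the augmented kernel p̃(x,a) as the pushforward of p(s₁,a₁) under s₂ ↦ (s₂, a₂, …, a_d, a); the delayed reward r̃(x,a) = ∫ r(s,a) d b(x)(s); the delayed value Ṽ(x) = Σ_{t≥0} γ^t E[r̃(x_t, a_t)] where x₀ = x, a_t ~ π̃(x_t), x_{t+1} ~ p̃(x_t, a_t); and the discounted visitation measure d^{π̃}_x = (1−γ) Σ_{t≥0}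 γ^t · law(x_t). Then for every x ∈ X: ∫ V(s) d b(x)(s) − Ṽ(x) = (1/(1−γ)) · ∫_X [ ∫ V(s) d b(x')(s) − ∫_S ∫_A Q(s,a) d π̃(x')(a) d b(x')(s) ] d d^{π̃}_x(x'). -/
open MeasureTheory

/-- The belief of an augmented state `x = (s₁, a₁, …, a_d)`. -/
noncomputable def beliefX {S A : Type*} [MeasurableSpace S] {d : ℕ}
    (p : S → A → Measure S) (x : S × (Fin d → A)) : Measure S :=
  belief p x.1 (List.ofFn x.2)

/-- Shift an action queue, dropping the oldest action and appending the new one. -/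
def shiftQueue {A : Type*} {d : ℕ} (q : Fin d → A) (a : A) : Fin d → A :=
  fun i => if h : (i : ℕ) + 1 < d then q ⟨(i : ℕ) + 1, h⟩ else a

/-- The augmented transition kernel `p̃((s₁,a₁,…,a_d), a)`: the pushforward of `p(s₁, a₁)`
under `s₂ ↦ (s₂, a₂, …, a_d, a)`. -/
noncomputable def augKernel {S A : Type*} [MeasurableSpace S] [MeasurableSpace A] {d : ℕ}
    (p : S → A → Measure S) (x : S × (Fin d → A)) (a : A) : Measure (S × (Fin d → A)) :=
  if h : 0 < d then (p x.1 (x.2 ⟨0, h⟩)).map (fun s₂ => (s₂, shiftQueue x.2 a))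
  else Measure.dirac x

/-- The delayed reward `r̃(x, a) = ∫ r(s, a) d b(x)(s)`. -/
noncomputable def delayedReward {S A : Type*} [MeasurableSpace S] {d : ℕ}
    (p : S → A → Measure S) (r : S → A → ℝ) (x : S × (Fin d → A)) (a : A) : ℝ :=
  ∫ s, r s a ∂(beliefX p x)

/-- The law of the state after `t` steps, starting from `init`, following policy `π` and
kernel `K`. -/
noncomputable def stateDist {Z A : Type*} [MeasurableSpace Z] [MeasurableSpace A]
    (K : Z → A → Measure Z) (π : Z → Measure A) (init : Measure Z) : ℕ → Measure Z
  | 0 => init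
  | t + 1 => (stateDist K π init t).bind fun z => (π z).bind fun a => K z a

/-- The value function: the discounted sum of expected rewards of policy `π` in the MDP with
kernel `K` and reward `r`, started from `z`. -/
noncomputable def value {Z A : Type*} [MeasurableSpace Z] [MeasurableSpace A]
    (K : Z → A → Measure Z) (π : Z → Measure A) (r : Z → A → ℝ) (γ : ℝ) (z : Z) : ℝ :=
  ∑' t : ℕ, γ ^ t * ∫ z', ∫ a, r z' a ∂(π z') ∂(stateDist K π (Measure.dirac z) t)

/-- The state-action value function `Q(s,a) = r(s,a) + γ ∫ V(s') dp(s,a)(s')`. -/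
noncomputable def qValue {Z A : Type*} [MeasurableSpace Z] [MeasurableSpace A]
    (K : Z → A → Measure Z) (π : Z → Measure A) (r : Z → A → ℝ) (γ : ℝ) (z : Z) (a : A) : ℝ :=
  r z a + γ * ∫ z', value K π r γ z' ∂(K z a)

/-- The discounted visitation measure `(1−γ) Σ_t γ^t law(z_t)` of the process started at `z`. -/
noncomputable def visitation {Z A : Type*} [MeasurableSpace Z] [MeasurableSpace A]
    (K : Z → A → Measure Z) (π : Z → Measure A) (γ : ℝ) (z : Z) : Measure Z :=
  ENNReal.ofReal (1 - γ) •
    Measure.sum fun t : ℕ => ENNReal.ofReal (γ ^ t) • stateDist K π (Measure.dirac z) t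

/-!
In any MDP, for a policy `π` with Bellman operator `T^π` and any bounded measurable `W`, the state
laws `μ_t` satisfy `∫ T^π W dμ_t = ∫ r^π dμ_t + γ ∫ W dμ_{t+1}`, where
`r^π z = ∫ r z a dπ(z)`. Hence the series
`∑ γ^t ∫ (W - T^π W) dμ_t` telescopes to `W z - V^π z`, and it is `(1 - γ)⁻¹` times the integral
of `W - T^π W` against the visitation measure. The lemma is this identity in the augmented MDP for
`W x = ∫ V d b(x)`: averaging `b` over one augmented transition `p̃(x, a)` is the same as pushing
`b(x)` through `p(·, a)`, so `T^π̃ W x` is exactly the belief average `∫∫ Q dπ̃(x) db(x)`.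
-/

open ProbabilityTheory

namespace DelayedMDP

section MarkovFamily

variable {α β γ : Type*} [MeasurableSpace α] [MeasurableSpace β] [MeasurableSpace γ]

lemma abs_integral_le_of_abs_le {μ : Measure α} [IsProbabilityMeasure μ] {f : α → ℝ} {M : ℝ}
    (hf : ∀ a, |f a| ≤ M) : |∫ a, f a ∂μ| ≤ M := by
  simpa using norm_integral_le_of_norm_le_const (μ := μ) (f := f) (ae_of_all _ hf)

lemma integrable_of_abs_le {μ : Measure α} [IsFiniteMeasure μ] {f : α → ℝ} (hf : Measurable f)
    {M : ℝ} (hfM : ∀ a, |f a| ≤ M) : Integrable f μ :=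
  .of_bound hf.aestronglyMeasurable M (ae_of_all _ (p := fun a => ‖f a‖ ≤ M) hfM)

/-- The kernels and policies of the statement are curried families of measures rather than
`Kernel`s; these are the two conditions making such a family a Markov kernel. -/
structure IsMarkovFamily (κ : α → Measure β) : Prop where
  measurable : Measurable κ
  isProbabilityMeasure : ∀ a, IsProbabilityMeasure (κ a)

namespace IsMarkovFamily

lemma comp {κ : β → Measure γ} (hκ : IsMarkovFamily κ) {f : α → β} (hf : Measurable f) :
    IsMarkovFamily fun a => κ (f a) :=
  ⟨hκ.measurable.comp hf, fun a => hκ.isProbabilityMeasure (f a)⟩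

lemma of_uncurry_left {κ : α → β → Measure γ} (hκ : IsMarkovFamily (Function.uncurry κ))
    (a : α) : IsMarkovFamily (κ a) :=
  hκ.comp measurable_prodMk_left

lemma of_uncurry_right {κ : α → β → Measure γ} (hκ : IsMarkovFamily (Function.uncurry κ))
    (b : β) : IsMarkovFamily fun a => κ a b :=
  hκ.comp measurable_prodMk_right

lemma dirac {f : α → β} (hf : Measurable f) : IsMarkovFamily fun a => Measure.dirac (f a) :=
  ⟨Measure.measurable_dirac.comp hf, fun _ => inferInstance⟩

lemma isProbabilityMeasure_bind {κ : α → Measure β} (hκ : IsMarkovFamily κ) (μ : Measure α)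
    [IsProbabilityMeasure μ] : IsProbabilityMeasure (μ.bind κ) :=
  MeasureTheory.isProbabilityMeasure_bind hκ.measurable.aemeasurable
    (ae_of_all _ hκ.isProbabilityMeasure)

lemma measurable_lintegral {m : α → Measure β} (hm : IsMarkovFamily m) {f : α → β → ENNReal}
    (hf : Measurable (Function.uncurry f)) : Measurable fun a => ∫⁻ b, f a b ∂(m a) :=
  have : IsMarkovKernel (Kernel.mk m hm.measurable) := ⟨hm.isProbabilityMeasure⟩
  hf.lintegral_kernel_prod_right (κ := Kernel.mk m hm.measurable)

lemma measurable_integral {m : α → Measure β} (hm : IsMarkovFamily m) {f : α → β → ℝ}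
    (hf : Measurable (Function.uncurry f)) : Measurable fun a => ∫ b, f a b ∂(m a) :=
  have : IsMarkovKernel (Kernel.mk m hm.measurable) := ⟨hm.isProbabilityMeasure⟩
  (hf.stronglyMeasurable.integral_kernel_prod_right (κ := Kernel.mk m hm.measurable)).measurable

lemma bind {m : α → Measure β} (hm : IsMarkovFamily m) {κ : α → β → Measure γ}
    (hκ : IsMarkovFamily (Function.uncurry κ)) : IsMarkovFamily fun a => (m a).bind (κ a) := by
  refine ⟨Measure.measurable_of_measurable_coe _ fun s hs => ?_, fun a => ?_⟩
  · have h (a : α) : (m a).bind (κ a) s = ∫⁻ b, κ a b s ∂(m a) :=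
      Measure.bind_apply hs (hκ.of_uncurry_left a).measurable.aemeasurable
    rw [show (fun a => (m a).bind (κ a) s) = _ from funext h]
    exact hm.measurable_lintegral (f := fun a b => κ a b s)
      ((Measure.measurable_coe hs).comp hκ.measurable)
  · have := hm.isProbabilityMeasure a
    exact (hκ.of_uncurry_left a).isProbabilityMeasure_bind _

lemma abs_integral_le {m : α → Measure β} (hm : IsMarkovFamily m) {f : β → ℝ} {M : ℝ}
    (hfM : ∀ b, |f b| ≤ M) (a : α) : |∫ b, f b ∂(m a)| ≤ M :=
  have := hm.isProbabilityMeasure a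
  abs_integral_le_of_abs_le hfM

lemma integrable_integral {m : α → Measure β} (hm : IsMarkovFamily m) {f : β → ℝ}
    (hf : Measurable f) {M : ℝ} (hfM : ∀ b, |f b| ≤ M) (μ : Measure α) [IsFiniteMeasure μ] :
    Integrable (fun a => ∫ b, f b ∂(m a)) μ :=
  integrable_of_abs_le (hm.measurable_integral (f := fun _ b => f b) (hf.comp measurable_snd))
    (hm.abs_integral_le hfM)

end IsMarkovFamily

lemma integral_bind {κ : α → Measure β} (hκ : IsMarkovFamily κ) (μ : Measure α)
    [IsProbabilityMeasure μ] {f : β → ℝ} (hf : Measurable f) {M : ℝ} (hfM : ∀ b, |f b| ≤ M) :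
    ∫ b, f b ∂(μ.bind κ) = ∫ a, ∫ b, f b ∂(κ a) ∂μ := by
  have hcomp : μ.bind κ = (Kernel.mk κ hκ.measurable ∘ₖ Kernel.const Unit μ) () :=
    Measure.comp_eq_comp_const_apply (κ := Kernel.mk κ hκ.measurable) (μ := μ)
  have := hκ.isProbabilityMeasure_bind μ
  rw [hcomp] at this ⊢
  exact Kernel.integral_comp (integrable_of_abs_le hf hfM)

end MarkovFamily

lemma norm_pow_mul_le {γ : ℝ} (hγ0 : 0 ≤ γ) {x M : ℝ} (hx : |x| ≤ M) (t : ℕ) :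
    ‖γ ^ t * x‖ ≤ M * γ ^ t := by
  rw [Real.norm_eq_abs, abs_mul, abs_of_nonneg (pow_nonneg hγ0 t), mul_comm M]
  exact mul_le_mul_of_nonneg_left hx (pow_nonneg hγ0 t)

lemma summable_pow_mul_of_abs_le {γ : ℝ} (hγ0 : 0 ≤ γ) (hγ1 : γ < 1) {f : ℕ → ℝ} {M : ℝ}
    (hf : ∀ t, |f t| ≤ M) : Summable fun t => γ ^ t * f t :=
  .of_norm_bounded ((summable_geometric_of_lt_one hγ0 hγ1).mul_left M) fun t =>
    norm_pow_mul_le hγ0 (hf t) t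

lemma abs_tsum_pow_mul_le {γ : ℝ} (hγ0 : 0 ≤ γ) (hγ1 : γ < 1) {f : ℕ → ℝ} {M : ℝ}
    (hf : ∀ t, |f t| ≤ M) : |∑' t, γ ^ t * f t| ≤ M * (1 - γ)⁻¹ := by
  rw [← Real.norm_eq_abs]
  exact tsum_of_norm_bounded ((hasSum_geometric_of_lt_one hγ0 hγ1).mul_left M) fun t =>
    norm_pow_mul_le hγ0 (hf t) t

lemma hasSum_sub_succ {a : ℕ → ℝ} (ha : Summable a) :
    HasSum (fun t => a t - a (t + 1)) (a 0) := by
  have ha' : Summable fun t => a (t + 1) := (summable_nat_add_iff 1).mpr ha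
  have h := (ha.sub ha').hasSum
  rwa [ha.tsum_sub ha', ha.tsum_eq_zero_add, add_sub_cancel_right] at h

section MDP

variable {Z A : Type*} [MeasurableSpace Z] [MeasurableSpace A]

noncomputable def bellman (K : Z → A → Measure Z) (π : Z → Measure A) (r : Z → A → ℝ) (γ : ℝ)
    (W : Z → ℝ) (z : Z) : ℝ :=
  ∫ a, (r z a + γ * ∫ z', W z' ∂(K z a)) ∂(π z)

variable {K : Z → A → Measure Z} {π : Z → Measure A}

lemma isMarkovFamily_stateDist (hK : IsMarkovFamily (Function.uncurry K))
    (hπ : IsMarkovFamily π) (t : ℕ) :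
    IsMarkovFamily fun z => stateDist K π (Measure.dirac z) t := by
  induction t with
  | zero => exact .dirac measurable_id
  | succ t ih =>
    have hstep := hπ.bind hK
    exact ⟨(Measure.measurable_bind' hstep.measurable).comp ih.measurable, fun z =>
      have := ih.isProbabilityMeasure z
      hstep.isProbabilityMeasure_bind _⟩

lemma abs_integral_integral_le (hπ : IsMarkovFamily π) {r : Z → A → ℝ} {M : ℝ}
    (hr : ∀ z a, |r z a| ≤ M) (μ : Measure Z) [IsProbabilityMeasure μ] :
    |∫ z, ∫ a, r z a ∂(π z) ∂μ| ≤ M :=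
  abs_integral_le_of_abs_le fun z =>
    have := hπ.isProbabilityMeasure z
    abs_integral_le_of_abs_le (hr z)

variable {r : Z → A → ℝ} {γ : ℝ}

lemma hasSum_value (hK : IsMarkovFamily (Function.uncurry K)) (hπ : IsMarkovFamily π) {M : ℝ}
    (hr : ∀ z a, |r z a| ≤ M) (hγ0 : 0 ≤ γ) (hγ1 : γ < 1) (z : Z) :
    HasSum (fun t => γ ^ t * ∫ z', ∫ a, r z' a ∂(π z') ∂(stateDist K π (Measure.dirac z) t))
      (value K π r γ z) :=
  (summable_pow_mul_of_abs_le hγ0 hγ1 fun t =>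
    have := (isMarkovFamily_stateDist hK hπ t).isProbabilityMeasure z
    abs_integral_integral_le hπ hr _).hasSum

lemma abs_value_le (hK : IsMarkovFamily (Function.uncurry K)) (hπ : IsMarkovFamily π) {M : ℝ}
    (hr : ∀ z a, |r z a| ≤ M) (hγ0 : 0 ≤ γ) (hγ1 : γ < 1) (z : Z) :
    |value K π r γ z| ≤ M * (1 - γ)⁻¹ :=
  abs_tsum_pow_mul_le hγ0 hγ1 fun t =>
    have := (isMarkovFamily_stateDist hK hπ t).isProbabilityMeasure z
    abs_integral_integral_le hπ hr _

lemma measurable_value (hK : IsMarkovFamily (Function.uncurry K)) (hπ : IsMarkovFamily π)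
    (hr_meas : Measurable (Function.uncurry r)) {M : ℝ} (hr : ∀ z a, |r z a| ≤ M)
    (hγ0 : 0 ≤ γ) (hγ1 : γ < 1) : Measurable (value K π r γ) := by
  have hterm (t : ℕ) : Measurable fun z =>
      γ ^ t * ∫ z', ∫ a, r z' a ∂(π z') ∂(stateDist K π (Measure.dirac z) t) :=
    measurable_const.mul <| (isMarkovFamily_stateDist hK hπ t).measurable_integral
      (f := fun _ z' => ∫ a, r z' a ∂(π z')) ((hπ.measurable_integral hr_meas).comp measurable_snd)
  exact measurable_of_tendsto_metrizable (fun n => Finset.measurable_sum _ fun t _ => hterm t)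
    (tendsto_pi_nhds.mpr fun z => (hasSum_value hK hπ hr hγ0 hγ1 z).tendsto_sum_nat)

lemma bellman_eq (hK : IsMarkovFamily (Function.uncurry K)) (hπ : IsMarkovFamily π)
    (hr_meas : Measurable (Function.uncurry r)) {M : ℝ} (hr : ∀ z a, |r z a| ≤ M) {W : Z → ℝ}
    (hW : Measurable W) {MW : ℝ} (hW_bdd : ∀ z, |W z| ≤ MW) (z : Z) :
    bellman K π r γ W z = ∫ a, r z a ∂(π z) + γ * ∫ z', W z' ∂((π z).bind (K z)) := by
  have := hπ.isProbabilityMeasure z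
  have hKz : IsMarkovFamily (K z) := hK.of_uncurry_left z
  rw [bellman, integral_add, integral_const_mul, integral_bind hKz _ hW hW_bdd]
  · exact integrable_of_abs_le (hr_meas.comp measurable_prodMk_left) (hr z)
  · exact (hKz.integrable_integral hW hW_bdd _).const_mul γ

lemma measurable_bellman (hK : IsMarkovFamily (Function.uncurry K)) (hπ : IsMarkovFamily π)
    (hr_meas : Measurable (Function.uncurry r)) {W : Z → ℝ} (hW : Measurable W) :
    Measurable (bellman K π r γ W) :=
  hπ.measurable_integral (f := fun z a => r z a + γ * ∫ z', W z' ∂(K z a)) <|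
    hr_meas.add <| measurable_const.mul <|
      hK.measurable_integral (f := fun _ z' => W z') (hW.comp measurable_snd)

lemma abs_bellman_le (hK : IsMarkovFamily (Function.uncurry K)) (hπ : IsMarkovFamily π)
    {M : ℝ} (hr : ∀ z a, |r z a| ≤ M) {W : Z → ℝ} {MW : ℝ} (hW_bdd : ∀ z, |W z| ≤ MW) (z : Z) :
    |bellman K π r γ W z| ≤ M + |γ| * MW := by
  have := hπ.isProbabilityMeasure z
  refine abs_integral_le_of_abs_le fun a => (abs_add_le _ _).trans (add_le_add (hr z a) ?_)
  rw [abs_mul]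
  exact mul_le_mul_of_nonneg_left ((hK.of_uncurry_left z).abs_integral_le hW_bdd a) (abs_nonneg γ)

lemma integral_bellman (hK : IsMarkovFamily (Function.uncurry K)) (hπ : IsMarkovFamily π)
    (hr_meas : Measurable (Function.uncurry r)) {M : ℝ} (hr : ∀ z a, |r z a| ≤ M) {W : Z → ℝ}
    (hW : Measurable W) {MW : ℝ} (hW_bdd : ∀ z, |W z| ≤ MW) (μ : Measure Z)
    [IsProbabilityMeasure μ] :
    ∫ z, bellman K π r γ W z ∂μ = ∫ z, ∫ a, r z a ∂(π z) ∂μ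
      + γ * ∫ z, W z ∂(μ.bind fun z => (π z).bind (K z)) := by
  simp_rw [bellman_eq hK hπ hr_meas hr hW hW_bdd]
  rw [integral_add, integral_const_mul, integral_bind (hπ.bind hK) _ hW hW_bdd]
  · exact integrable_of_abs_le (hπ.measurable_integral hr_meas)
      fun z => have := hπ.isProbabilityMeasure z; abs_integral_le_of_abs_le (hr z)
  · exact ((hπ.bind hK).integrable_integral hW hW_bdd _).const_mul γ

lemma integral_visitation (hK : IsMarkovFamily (Function.uncurry K)) (hπ : IsMarkovFamily π)
    (hγ0 : 0 ≤ γ) (hγ1 : γ < 1) {f : Z → ℝ} (hf : Measurable f) {M : ℝ} (hfM : ∀ z, |f z| ≤ M)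
    (z : Z) :
    ∫ z', f z' ∂(visitation K π γ z)
      = (1 - γ) * ∑' t, γ ^ t * ∫ z', f z' ∂(stateDist K π (Measure.dirac z) t) := by
  have hμ (t : ℕ) := (isMarkovFamily_stateDist hK hπ t).isProbabilityMeasure z
  have : IsFiniteMeasure
      (Measure.sum fun t => ENNReal.ofReal (γ ^ t) • stateDist K π (Measure.dirac z) t) := by
    constructor
    simp only [Measure.sum_apply _ MeasurableSet.univ, Measure.smul_apply, measure_univ,
      smul_eq_mul, mul_one, ENNReal.ofReal_pow hγ0, ENNReal.tsum_geometric]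
    exact ENNReal.inv_lt_top.mpr (tsub_pos_of_lt (ENNReal.ofReal_lt_one.mpr hγ1))
  rw [visitation, integral_smul_measure, integral_sum_measure (integrable_of_abs_le hf hfM),
    ENNReal.toReal_ofReal (by linarith), smul_eq_mul]
  congr 1
  refine tsum_congr fun t => ?_
  rw [integral_smul_measure, ENNReal.toReal_ofReal (pow_nonneg hγ0 t), smul_eq_mul]

theorem sub_value_eq_integral_visitation (hK : IsMarkovFamily (Function.uncurry K))
    (hπ : IsMarkovFamily π) (hr_meas : Measurable (Function.uncurry r)) {M : ℝ}
    (hr : ∀ z a, |r z a| ≤ M) (hγ0 : 0 ≤ γ) (hγ1 : γ < 1) {W : Z → ℝ} (hW : Measurable W)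
    {MW : ℝ} (hW_bdd : ∀ z, |W z| ≤ MW) (z : Z) :
    W z - value K π r γ z
      = (1 / (1 - γ)) * ∫ z', (W z' - bellman K π r γ W z') ∂(visitation K π γ z) := by
  set μ := stateDist K π (Measure.dirac z)
  have hμ (t : ℕ) : IsProbabilityMeasure (μ t) :=
    (isMarkovFamily_stateDist hK hπ t).isProbabilityMeasure z
  have hμ_succ (t : ℕ) : μ (t + 1) = (μ t).bind fun z => (π z).bind (K z) := rfl
  set u := fun t => γ ^ t * ∫ z', W z' ∂(μ t)
  have hu : Summable u :=
    summable_pow_mul_of_abs_le hγ0 hγ1 fun t => abs_integral_le_of_abs_le hW_bdd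
  have hu0 : u 0 = W z := by
    simpa [u, μ, stateDist] using integral_dirac' W z hW.stronglyMeasurable
  have hT_meas := measurable_bellman (γ := γ) hK hπ hr_meas hW
  have hT_bdd := abs_bellman_le (γ := γ) hK hπ hr hW_bdd
  have hterm (t : ℕ) : γ ^ t * ∫ z', (W z' - bellman K π r γ W z') ∂(μ t)
      = u t - u (t + 1) - γ ^ t * ∫ z', ∫ a, r z' a ∂(π z') ∂(μ t) := by
    rw [integral_sub (integrable_of_abs_le hW hW_bdd) (integrable_of_abs_le hT_meas hT_bdd),
      integral_bellman hK hπ hr_meas hr hW hW_bdd]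
    simp only [u, pow_succ, hμ_succ]
    ring
  have hsum := (hasSum_sub_succ hu).sub (hasSum_value hK hπ hr hγ0 hγ1 z)
  rw [hu0, ← funext hterm] at hsum
  have h1γ : 1 - γ ≠ 0 := by linarith
  rw [integral_visitation hK hπ hγ0 hγ1 (f := fun z' => W z' - bellman K π r γ W z')
    (hW.sub hT_meas) (fun z' => (abs_sub _ _).trans (add_le_add (hW_bdd z') (hT_bdd z'))),
    hsum.tsum_eq]
  field_simp

end MDP

section Belief

variable {S A : Type*} [MeasurableSpace S] {p : S → A → Measure S}

lemma belief_append_singleton (s : S) (l : List A) (a : A) :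
    belief p s (l ++ [a]) = (belief p s l).bind fun s' => p s' a := by
  simp [belief, List.foldl_append]

variable [MeasurableSpace A]

lemma isMarkovFamily_belief (hp : IsMarkovFamily (Function.uncurry p)) {X : Type*}
    [MeasurableSpace X] {g : X → S} (hg : Measurable g) (l : List (X → A))
    (hl : ∀ f ∈ l, Measurable f) : IsMarkovFamily fun x => belief p (g x) (l.map (· x)) := by
  induction l using List.reverseRecOn with
  | nil => exact .dirac hg
  | append_singleton l f ih =>
    simp only [List.map_append, List.map_singleton, belief_append_singleton]
    refine (ih fun f' hf' => hl f' (by simp [hf'])).bind ?_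
    exact hp.comp (measurable_snd.prodMk ((hl f (by simp)).comp measurable_fst))

lemma measurable_belief (hp : IsMarkovFamily (Function.uncurry p)) (l : List A) :
    Measurable fun s => belief p s l := by
  simpa [Function.comp_def] using
    (isMarkovFamily_belief hp measurable_id (l.map fun a _ => a) (by simp)).measurable

lemma belief_cons (hp : IsMarkovFamily (Function.uncurry p)) (s : S) (a : A) (l : List A) :
    belief p s (a :: l) = (p s a).bind fun s' => belief p s' l := by
  induction l using List.reverseRecOn with
  | nil =>
    simpa [belief] using Measure.dirac_bind (hp.of_uncurry_right a).measurable s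
  | append_singleton l b ih =>
    rw [← List.cons_append, belief_append_singleton, ih, Measure.bind_bind
      (measurable_belief hp l).aemeasurable (hp.of_uncurry_right b).measurable.aemeasurable]
    simp_rw [belief_append_singleton]

lemma isMarkovFamily_beliefX (hp : IsMarkovFamily (Function.uncurry p)) {d : ℕ} :
    IsMarkovFamily (beliefX p (d := d)) := by
  have h := isMarkovFamily_belief hp measurable_fst
    (List.ofFn fun i (x : S × (Fin d → A)) => x.2 i) (by simp [List.mem_ofFn]; fun_prop)
  simp only [List.map_ofFn, Function.comp_def] at h
  exact h

end Belief

section AugmentedMDP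

variable {S A : Type*} {d : ℕ}

lemma ofFn_shiftQueue (q : Fin (d + 1) → A) (a : A) :
    List.ofFn (shiftQueue q a) = List.ofFn (Fin.tail q) ++ [a] := by
  rw [List.ofFn_succ', List.concat_eq_append]
  congr 2
  · ext i
    simp [shiftQueue, Fin.tail, Fin.succ]
  · simp [shiftQueue]

variable [MeasurableSpace A]

lemma measurable_shiftQueue : Measurable fun w : (Fin d → A) × A => shiftQueue w.1 w.2 := by
  refine measurable_pi_lambda _ fun i => ?_
  by_cases h : (i : ℕ) + 1 < d
  · simp only [shiftQueue, dif_pos h]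
    fun_prop
  · simpa only [shiftQueue, dif_neg h] using measurable_snd

variable [MeasurableSpace S] {p : S → A → Measure S}

lemma augKernel_succ (x : S × (Fin (d + 1) → A)) (a : A) :
    augKernel p x a = (p x.1 (x.2 0)).map fun s₂ => (s₂, shiftQueue x.2 a) :=
  dif_pos d.succ_pos

lemma isMarkovFamily_augKernel (hp : IsMarkovFamily (Function.uncurry p)) :
    IsMarkovFamily (Function.uncurry (augKernel p : S × (Fin (d + 1) → A) → A → _)) := by
  have h : Function.uncurry (augKernel p : S × (Fin (d + 1) → A) → A → _) = fun q =>
      (p q.1.1 (q.1.2 0)).bind fun s₂ => Measure.dirac (s₂, shiftQueue q.1.2 q.2) := by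
    ext1 q
    rw [Function.uncurry_apply_pair, augKernel_succ]
    exact (Measure.bind_dirac_eq_map _ (by fun_prop)).symm
  rw [h]
  have hfirst : Measurable fun q : (S × (Fin (d + 1) → A)) × A => (q.1.1, q.1.2 0) := by fun_prop
  have hnext : Measurable fun w : ((S × (Fin (d + 1) → A)) × A) × S =>
      (w.2, shiftQueue w.1.1.2 w.1.2) :=
    measurable_snd.prodMk <| measurable_shiftQueue.comp
      (f := fun w : ((S × (Fin (d + 1) → A)) × A) × S => (w.1.1.2, w.1.2)) (by fun_prop)
  exact (hp.comp hfirst).bind (.dirac hnext)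

lemma bind_augKernel_beliefX (hp : IsMarkovFamily (Function.uncurry p))
    (x : S × (Fin (d + 1) → A)) (a : A) :
    (augKernel p x a).bind (beliefX p) = (beliefX p x).bind fun s => p s a := by
  have hpa : Measurable fun s => p s a := (hp.of_uncurry_right a).measurable
  have hbX := (isMarkovFamily_beliefX hp (d := d + 1)).measurable
  have hshift : Measurable fun s₂ : S => (s₂, shiftQueue x.2 a) := by fun_prop
  have hdirac : Measurable fun s₂ : S => Measure.dirac (s₂, shiftQueue x.2 a) :=
    Measure.measurable_dirac.comp hshift
  rw [augKernel_succ, ← Measure.bind_dirac_eq_map _ hshift,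
    Measure.bind_bind hdirac.aemeasurable hbX.aemeasurable]
  simp_rw [Measure.dirac_bind hbX]
  simp only [beliefX, ofFn_shiftQueue, belief_append_singleton]
  rw [List.ofFn_succ, belief_cons hp, Measure.bind_bind (measurable_belief hp _).aemeasurable
    hpa.aemeasurable]
  rfl

variable {r : S → A → ℝ} {γ : ℝ}

lemma measurable_delayedReward (hp : IsMarkovFamily (Function.uncurry p))
    (hr_meas : Measurable (Function.uncurry r)) :
    Measurable (Function.uncurry (delayedReward p r : S × (Fin d → A) → A → ℝ)) :=
  ((isMarkovFamily_beliefX hp).comp measurable_fst).measurable_integral (f := fun q s => r s q.2)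
    (hr_meas.comp (measurable_snd.prodMk measurable_fst.snd))

lemma abs_delayedReward_le (hp : IsMarkovFamily (Function.uncurry p)) {M : ℝ}
    (hr : ∀ s a, |r s a| ≤ M) (x : S × (Fin d → A)) (a : A) : |delayedReward p r x a| ≤ M :=
  (isMarkovFamily_beliefX hp).abs_integral_le (fun s => hr s a) x

lemma integral_augKernel_integral_beliefX (hp : IsMarkovFamily (Function.uncurry p))
    {V : S → ℝ} (hV : Measurable V) {MV : ℝ} (hV_bdd : ∀ s, |V s| ≤ MV)
    (x : S × (Fin (d + 1) → A)) (a : A) :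
    ∫ x', ∫ s, V s ∂(beliefX p x') ∂(augKernel p x a)
      = ∫ s, ∫ s', V s' ∂(p s a) ∂(beliefX p x) := by
  have hbX := isMarkovFamily_beliefX hp (d := d + 1)
  have : IsProbabilityMeasure (augKernel p x a) :=
    (isMarkovFamily_augKernel hp).isProbabilityMeasure (x, a)
  have := hbX.isProbabilityMeasure x
  rw [← integral_bind hbX _ hV hV_bdd, bind_augKernel_beliefX hp,
    integral_bind (hp.of_uncurry_right a) _ hV hV_bdd]

variable {π : S → Measure A}

lemma measurable_qValue (hp : IsMarkovFamily (Function.uncurry p))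
    (hr_meas : Measurable (Function.uncurry r)) (hV : Measurable (value p π r γ)) :
    Measurable (Function.uncurry (qValue p π r γ)) :=
  hr_meas.add <| measurable_const.mul <|
    hp.measurable_integral (f := fun _ s' => value p π r γ s') (hV.comp measurable_snd)

lemma abs_qValue_le (hp : IsMarkovFamily (Function.uncurry p)) {M : ℝ} (hr : ∀ s a, |r s a| ≤ M)
    {MV : ℝ} (hV_bdd : ∀ s, |value p π r γ s| ≤ MV) (s : S) (a : A) :
    |qValue p π r γ s a| ≤ M + |γ| * MV := by
  refine (abs_add_le _ _).trans (add_le_add (hr s a) ?_)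
  rw [abs_mul]
  exact mul_le_mul_of_nonneg_left ((hp.of_uncurry_left s).abs_integral_le hV_bdd a) (abs_nonneg γ)

lemma integral_qValue_beliefX (hp : IsMarkovFamily (Function.uncurry p))
    (hr_meas : Measurable (Function.uncurry r)) {M : ℝ} (hr : ∀ s a, |r s a| ≤ M)
    (hV : Measurable (value p π r γ)) {MV : ℝ} (hV_bdd : ∀ s, |value p π r γ s| ≤ MV)
    (x : S × (Fin (d + 1) → A)) (a : A) :
    ∫ s, qValue p π r γ s a ∂(beliefX p x) = delayedReward p r x a
      + γ * ∫ x', ∫ s, value p π r γ s ∂(beliefX p x') ∂(augKernel p x a) := by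
  have := (isMarkovFamily_beliefX hp).isProbabilityMeasure x
  have hpa : IsMarkovFamily fun s => p s a := hp.of_uncurry_right a
  rw [integral_augKernel_integral_beliefX hp hV hV_bdd, ← integral_const_mul, delayedReward,
    ← integral_add]
  · rfl
  · exact integrable_of_abs_le (hr_meas.comp (measurable_id.prodMk measurable_const)) (hr · a)
  · exact (hpa.integrable_integral hV hV_bdd _).const_mul γ

lemma integral_integral_qValue_beliefX (hp : IsMarkovFamily (Function.uncurry p))
    (hr_meas : Measurable (Function.uncurry r)) {M : ℝ} (hr : ∀ s a, |r s a| ≤ M)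
    (hV : Measurable (value p π r γ)) {MV : ℝ} (hV_bdd : ∀ s, |value p π r γ s| ≤ MV)
    {πdel : S × (Fin (d + 1) → A) → Measure A} (hπdel : IsMarkovFamily πdel)
    (x : S × (Fin (d + 1) → A)) :
    ∫ s, ∫ a, qValue p π r γ s a ∂(πdel x) ∂(beliefX p x) = bellman (augKernel p) πdel
      (delayedReward p r) γ (fun x' => ∫ s, value p π r γ s ∂(beliefX p x')) x := by
  have := (isMarkovFamily_beliefX hp).isProbabilityMeasure x
  have := hπdel.isProbabilityMeasure x
  rw [integral_integral_swap (integrable_of_abs_le (measurable_qValue hp hr_meas hV)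
    fun q => abs_qValue_le hp hr hV_bdd q.1 q.2)]
  exact integral_congr_ae (ae_of_all _ (integral_qValue_beliefX hp hr_meas hr hV hV_bdd x))

end AugmentedMDP

end DelayedMDP

open DelayedMDP

theorem delayed_performance_difference_general {S A : Type*}
    [MeasurableSpace S] [MeasurableSpace A]
    (p : S → A → Measure S) (hp_prob : ∀ s a, IsProbabilityMeasure (p s a))
    (hp_meas : Measurable fun q : S × A => p q.1 q.2)
    (r : S → A → ℝ) (hr_meas : Measurable fun q : S × A => r q.1 q.2)
    (Mr : ℝ) (hr_bdd : ∀ s a, |r s a| ≤ Mr)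
    (γ : ℝ) (hγ0 : 0 ≤ γ) (hγ1 : γ < 1)
    (d : ℕ) (hd : 1 ≤ d)
    (πE : S → Measure A) (hπE_prob : ∀ s, IsProbabilityMeasure (πE s))
    (hπE_meas : Measurable πE)
    (πdel : S × (Fin d → A) → Measure A)
    (hπdel_prob : ∀ x, IsProbabilityMeasure (πdel x))
    (hπdel_meas : Measurable πdel) :
    ∀ x : S × (Fin d → A),
      (∫ s, value p πE r γ s ∂(beliefX p x))
          - value (augKernel p) πdel (delayedReward p r) γ x
        = (1 / (1 - γ)) *
            ∫ x' : S × (Fin d → A),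
              ((∫ s, value p πE r γ s ∂(beliefX p x'))
                - ∫ s, ∫ a, qValue p πE r γ s a ∂(πdel x') ∂(beliefX p x'))
              ∂(visitation (augKernel p) πdel γ x) := by
  obtain ⟨d, rfl⟩ : ∃ d', d = d' + 1 := ⟨d - 1, by omega⟩
  intro x
  have hp : IsMarkovFamily (Function.uncurry p) := ⟨hp_meas, fun q => hp_prob q.1 q.2⟩
  have hπE : IsMarkovFamily πE := ⟨hπE_meas, hπE_prob⟩
  have hπdel : IsMarkovFamily πdel := ⟨hπdel_meas, hπdel_prob⟩
  have hV := measurable_value hp hπE hr_meas hr_bdd hγ0 hγ1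
  have hV_bdd := abs_value_le hp hπE hr_bdd hγ0 hγ1
  have hbX := isMarkovFamily_beliefX hp (d := d + 1)
  refine (sub_value_eq_integral_visitation (isMarkovFamily_augKernel hp) hπdel
    (measurable_delayedReward hp hr_meas) (abs_delayedReward_le hp hr_bdd) hγ0 hγ1
    (hbX.measurable_integral (f := fun _ s => value p πE r γ s) (hV.comp measurable_snd))
    (hbX.abs_integral_le hV_bdd) x).trans ?_
  refine congrArg _ (integral_congr_ae (ae_of_all _ fun x' => ?_))
  dsimp only
  rw [integral_integral_qValue_beliefX hp hr_meas hr_bdd hV hV_bdd hπdel]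

/-- **Lemma 1 (Delayed Performance Difference Lemma).** For an undelayed policy `π_E` and a
`d`-delayed policy `π̃` (on the augmented space `X = S × A^d`), for every augmented state `x`:
`∫ V dB(x) − Ṽ(x) = (1/(1−γ)) ∫ [∫ V dB(x') − ∫∫ Q dπ̃(x') dB(x')] d d^{π̃}_x(x')`. -/
theorem delayed_performance_difference {S A : Type*}
    [MeasurableSpace S] [StandardBorelSpace S]
    [MeasurableSpace A] [StandardBorelSpace A]
    (p : S → A → Measure S) (hp_prob : ∀ s a, IsProbabilityMeasure (p s a))
    (hp_meas : Measurable fun q : S × A => p q.1 q.2)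
    (r : S → A → ℝ) (hr_meas : Measurable fun q : S × A => r q.1 q.2)
    (Mr : ℝ) (hr_bdd : ∀ s a, |r s a| ≤ Mr)
    (γ : ℝ) (hγ0 : 0 ≤ γ) (hγ1 : γ < 1)
    (d : ℕ) (hd : 1 ≤ d)
    (πE : S → Measure A) (hπE_prob : ∀ s, IsProbabilityMeasure (πE s))
    (hπE_meas : Measurable πE)
    (πdel : S × (Fin d → A) → Measure A)
    (hπdel_prob : ∀ x, IsProbabilityMeasure (πdel x))
    (hπdel_meas : Measurable πdel) :
    ∀ x : S × (Fin d → A),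
      (∫ s, value p πE r γ s ∂(beliefX p x))
          - value (augKernel p) πdel (delayedReward p r) γ x
        = (1 / (1 - γ)) *
            ∫ x' : S × (Fin d → A),
              ((∫ s, value p πE r γ s ∂(beliefX p x'))
                - ∫ s, ∫ a, qValue p πE r γ s a ∂(πdel x') ∂(beliefX p x'))
              ∂(visitation (augKernel p) πdel γ x) :=
  delayed_performance_difference_general p hp_prob hp_meas r hr_meas Mr hr_bdd γ hγ0 hγ1 d hd πE
    hπE_prob hπE_meas πdel hπdel_prob hπdel_meas
end

section
/- Let S and A be standard Borel spaces, π : S → ProbabilityMeasure A a measurable family of probability measures, and b a Borel probability measure on S. Let π̄ := b.bind π be the mixture measure on A (π̄(E) = ∫_S π(s)(E) db(s)). Then for every probability measure q on A: ∫_S KL(π(s) ‖ q) db(s) ≥ ∫_S KL(π(s) ‖ π̄) db(s), where KL denotes the Kullback–Leibler divergence (with values in [0,∞]). In other words, the mixture π̄ minimizes q ↦ E_{s~b}[KL(π(s) ‖ q)] over all probability measures q on A. -/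
open MeasureTheory Classical

/-- The Kullback–Leibler divergence `KL(μ ‖ ν)`, with values in `[0, ∞]`: if `μ ≪ ν` it is
`∫ φ(dμ/dν) dν` where `φ(t) = t log t − t + 1 ≥ 0` (which equals `∫ log(dμ/dν) dμ` for
probability measures), and `∞` otherwise. -/
noncomputable def klDiv {α : Type*} [MeasurableSpace α] (μ ν : Measure α) : ENNReal :=
  if μ ≪ ν then
    ∫⁻ x, ENNReal.ofReal ((μ.rnDeriv ν x).toReal * Real.log (μ.rnDeriv ν x).toReal
      - (μ.rnDeriv ν x).toReal + 1) ∂ν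
  else ⊤

open ProbabilityTheory

/-!
Let `P = b ⊗ₘ π` be the joint law of `(s, a)`, whose `A`-marginal is the mixture `π̄`. The averaged
divergence `∫ KL(π s ‖ q) db(s)` is `KL(P ‖ b × q)`. Disintegrating `P` along `A` instead, through
the posterior of `π` under `b`, the chain rule gives the compensation identity
`KL(P ‖ b × q) = KL(π̄ ‖ q) + KL(P ‖ b × π̄)`, so the average exceeds its value at `q = π̄` by
exactly `KL(π̄ ‖ q) ≥ 0`.
-/

namespace ProbabilityTheory

variable {α β : Type*} {mα : MeasurableSpace α} {mβ : MeasurableSpace β}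
  [MeasurableSpace.CountableOrCountablyGenerated α β]

lemma rnDeriv_measure_compProd_right (μ : Measure α) [IsFiniteMeasure μ] {κ η : Kernel α β}
    [IsFiniteKernel κ] [IsFiniteKernel η] (h_ac : ∀ᵐ a ∂μ, κ a ≪ η a) :
    (μ ⊗ₘ κ).rnDeriv (μ ⊗ₘ η) =ᵐ[μ ⊗ₘ η] fun p ↦ κ.rnDeriv η p.1 p.2 := by
  have h_eq : μ ⊗ₘ κ = (μ ⊗ₘ η).withDensity fun p ↦ κ.rnDeriv η p.1 p.2 := by
    rw [← Measure.compProd_withDensity (κ.measurable_rnDeriv η)]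
    refine Measure.compProd_congr ?_
    filter_upwards [h_ac] with a ha using (Kernel.withDensity_rnDeriv_eq ha).symm
  rw [h_eq]
  exact Measure.rnDeriv_withDensity _ (by fun_prop)

end ProbabilityTheory

namespace InformationTheory

variable {α β : Type*} {mα : MeasurableSpace α} {mβ : MeasurableSpace β}

lemma klDiv_map_measurableEquiv (e : α ≃ᵐ β) (μ ν : Measure α) [IsFiniteMeasure μ]
    [IsFiniteMeasure ν] : klDiv (μ.map e) (ν.map e) = klDiv μ ν := by
  refine le_antisymm (klDiv_map_le μ ν e.measurable) ?_
  simpa [Measure.map_map e.symm.measurable e.measurable] using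
    klDiv_map_le (μ.map e) (ν.map e) e.symm.measurable

lemma klDiv_compProd_right [MeasurableSpace.CountableOrCountablyGenerated α β]
    (μ : Measure α) [IsFiniteMeasure μ] (κ η : Kernel α β) [IsFiniteKernel κ] [IsFiniteKernel η] :
    klDiv (μ ⊗ₘ κ) (μ ⊗ₘ η) = ∫⁻ a, klDiv (κ a) (η a) ∂μ := by
  by_cases h_ac : ∀ᵐ a ∂μ, κ a ≪ η a
  · rw [klDiv_eq_lintegral_klFun_of_ac (Measure.AbsolutelyContinuous.compProd_right h_ac)]
    calc ∫⁻ p, ENNReal.ofReal (klFun ((μ ⊗ₘ κ).rnDeriv (μ ⊗ₘ η) p).toReal) ∂(μ ⊗ₘ η)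
        = ∫⁻ p, ENNReal.ofReal (klFun (κ.rnDeriv η p.1 p.2).toReal) ∂(μ ⊗ₘ η) := by
          refine lintegral_congr_ae ?_
          filter_upwards [rnDeriv_measure_compProd_right μ h_ac] with p hp
          rw [hp]
      _ = ∫⁻ a, ∫⁻ x, ENNReal.ofReal (klFun (κ.rnDeriv η a x).toReal) ∂(η a) ∂μ :=
          Measure.lintegral_compProd (by fun_prop)
      _ = ∫⁻ a, klDiv (κ a) (η a) ∂μ := by
          refine lintegral_congr_ae ?_
          filter_upwards [h_ac] with a ha
          rw [klDiv_eq_lintegral_klFun_of_ac ha]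
          refine lintegral_congr_ae ?_
          filter_upwards [κ.rnDeriv_eq_rnDeriv_measure (η := η) (a := a)] with x hx
          rw [hx]
  · have h_null : μ {a | ¬ κ a ≪ η a} ≠ 0 := h_ac
    have h_meas : MeasurableSet {a | ¬ κ a ≪ η a} :=
      (Kernel.measurableSet_absolutelyContinuous κ η).compl
    rw [klDiv_of_not_ac (mt Measure.AbsolutelyContinuous.kernel_of_compProd h_ac), eq_comm,
      eq_top_iff]
    calc ⊤ = ∫⁻ _ in {a | ¬ κ a ≪ η a}, ⊤ ∂μ := by simp [h_null]
      _ = ∫⁻ a in {a | ¬ κ a ≪ η a}, klDiv (κ a) (η a) ∂μ :=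
        setLIntegral_congr_fun h_meas fun a ha ↦ (klDiv_of_not_ac ha).symm
      _ ≤ ∫⁻ a, klDiv (κ a) (η a) ∂μ := setLIntegral_le_lintegral _ _

lemma klDiv_compProd_prod_eq_add [StandardBorelSpace α] (μ : Measure α) [IsProbabilityMeasure μ]
    (κ : Kernel α β) [IsMarkovKernel κ] (ν : Measure β) [IsFiniteMeasure ν] :
    klDiv (μ ⊗ₘ κ) (μ.prod ν) = klDiv (κ ∘ₘ μ) ν + klDiv (μ ⊗ₘ κ) (μ.prod (κ ∘ₘ μ)) := by
  have := nonempty_of_isProbabilityMeasure μ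
  have h_swap : ∀ (ν : Measure β) [IsFiniteMeasure ν],
      klDiv (μ ⊗ₘ κ) (μ.prod ν) = klDiv ((κ ∘ₘ μ) ⊗ₘ posterior κ μ) (ν ⊗ₘ Kernel.const β μ) := by
    intro ν _
    rw [compProd_posterior_eq_map_swap, Measure.compProd_const,
      ← Measure.prod_swap (μ := μ) (ν := ν)]
    exact (klDiv_map_measurableEquiv MeasurableEquiv.prodComm (μ ⊗ₘ κ) (μ.prod ν)).symm
  rw [h_swap, h_swap, klDiv_compProd_eq_add]

end InformationTheory

lemma klDiv_eq_informationTheory_klDiv {α : Type*} [MeasurableSpace α] (μ ν : Measure α)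
    [IsFiniteMeasure μ] [IsFiniteMeasure ν] : klDiv μ ν = InformationTheory.klDiv μ ν := by
  simp only [klDiv, InformationTheory.klDiv_eq_lintegral_klFun, InformationTheory.klFun_apply,
    sub_add_eq_add_sub]

lemma lintegral_klDiv_eq_klDiv_compProd_prod {α β : Type*} [MeasurableSpace α] [MeasurableSpace β]
    [MeasurableSpace.CountableOrCountablyGenerated α β] (μ : Measure α) [IsFiniteMeasure μ]
    (κ : Kernel α β) [IsFiniteKernel κ] (ν : Measure β) [IsFiniteMeasure ν] :
    ∫⁻ a, klDiv (κ a) ν ∂μ = InformationTheory.klDiv (μ ⊗ₘ κ) (μ.prod ν) := by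
  simp_rw [← Measure.compProd_const, InformationTheory.klDiv_compProd_right, Kernel.const_apply,
    klDiv_eq_informationTheory_klDiv]

/-- **Appendix D (KL loss).** The mixture `π̄ = b.bind π` minimizes
`q ↦ E_{s ~ b}[KL(π(s) ‖ q)]` over all probability measures `q`. -/
theorem mixture_minimizes_kl {S A : Type*}
    [MeasurableSpace S] [StandardBorelSpace S]
    [MeasurableSpace A] [StandardBorelSpace A]
    (π : S → Measure A) (hπ_prob : ∀ s, IsProbabilityMeasure (π s))
    (hπ_meas : Measurable π)
    (b : Measure S) [IsProbabilityMeasure b] :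
    ∀ q : Measure A, IsProbabilityMeasure q →
      (∫⁻ s, klDiv (π s) (b.bind π) ∂b) ≤ ∫⁻ s, klDiv (π s) q ∂b := by
  intro q hq
  let κ : Kernel S A := ⟨π, hπ_meas⟩
  have : IsMarkovKernel κ := ⟨hπ_prob⟩
  have : IsProbabilityMeasure (b.bind π) := inferInstanceAs (IsProbabilityMeasure (κ ∘ₘ b))
  have h_joint : ∀ ν : Measure A, IsFiniteMeasure ν →
      ∫⁻ s, klDiv (π s) ν ∂b = InformationTheory.klDiv (b ⊗ₘ κ) (b.prod ν) :=
    fun ν _ ↦ lintegral_klDiv_eq_klDiv_compProd_prod b κ ν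
  rw [h_joint q inferInstance, h_joint (b.bind π) inferInstance,
    InformationTheory.klDiv_compProd_prod_eq_add b κ q]
  exact le_add_self
end
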